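/- Let n ≥ 2, A > 0, α ≥ 0, R > 0, y₀ ∈ ℝⁿ, and let β satisfy n+1 ≤ β < n + α; set b = β/(n+α) ∈ (0,1). Then there exists M > 0 (depending only on A, b, R, α, n and β) such that the function W(x) = −M·(R² − |x − y₀|²)^b satisfies det D²W(x) ≤ A·(R − |x − y₀|)^{β−n−1}·|W(x)|^{−α} at every x ∈ B_R(y₀). -/

import Mathlib

/-- The determinant of the Hessian matrix of `u` at `x`. -/
noncomputable def hessianDet {n : ℕ} (u : EuclideanSpace ℝ (Fin n) → ℝ)
    (x : EuclideanSpace ℝ (Fin n)) : ℝ :=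
  (Matrix.of fun i j : Fin n =>
    iteratedFDeriv ℝ 2 u x ![EuclideanSpace.single i (1 : ℝ), EuclideanSpace.single j (1 : ℝ)]).det

/-!
Write `z = x - y₀` and `ρ = R² - |z|²`. The function `W = g(|z|²)` with `g(t) = -M (R² - t)^b` is
radial, so `D²W = 2g' I + 4g'' z zᵀ` and, by the matrix determinant lemma,
`det D²W = (2g')^(n-1) (2g' + 4g'' |z|²) = (2Mb)^n ρ^(nb-n-1) (ρ + 2(1-b)|z|²)
  ≤ (2Mb)^n 2R² ρ^(nb-n-1)`.
Since `b(n+α) = β`, `ρ^(nb-n-1) = ρ^(β-n-1) ρ^(-bα)`; moreover `ρ ≤ 2R (R - |z|)` with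
`β-n-1 ≥ 0`, and `|W|^(-α) = M^(-α) ρ^(-bα)`. The two sides therefore scale in `M` like `M^n` and
`M^(-α)`, and `M` with `M^(n+α) (2b)^n 2R² (2R)^(β-n-1) = A` works.
-/

open scoped RealInnerProductSpace
open Filter Topology

section Radial

variable {E : Type*} [NormedAddCommGroup E] [InnerProductSpace ℝ E]

theorem HasDerivAt.hasFDerivAt_comp_norm_sub_sq {g : ℝ → ℝ} {g' : ℝ} {y₀ x : E}
    (hg : HasDerivAt g g' (‖x - y₀‖ ^ 2)) :
    HasFDerivAt (fun y => g (‖y - y₀‖ ^ 2)) ((2 * g') • innerSL ℝ (x - y₀)) x := by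
  refine (hg.comp_hasFDerivAt x ((hasFDerivAt_id x).sub_const y₀).norm_sq).congr_fderiv ?_
  ext v
  simp only [id_eq, map_sub, ContinuousLinearMap.comp_id, smul_apply, sub_apply, coe_innerSL_apply,
    nsmul_eq_mul, Nat.cast_ofNat, smul_eq_mul]
  ring

theorem iteratedFDeriv_two_comp_norm_sub_sq_apply {g g' : ℝ → ℝ} {g'' : ℝ} {y₀ x : E}
    (hg : ∀ᶠ t in 𝓝 (‖x - y₀‖ ^ 2), HasDerivAt g (g' t) t)
    (hg' : HasDerivAt g' g'' (‖x - y₀‖ ^ 2)) (u v : E) :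
    iteratedFDeriv ℝ 2 (fun y => g (‖y - y₀‖ ^ 2)) x ![u, v] =
      2 * g' (‖x - y₀‖ ^ 2) * ⟪u, v⟫ + 4 * g'' * ⟪x - y₀, u⟫ * ⟪x - y₀, v⟫ := by
  have hfderiv : fderiv ℝ (fun y => g (‖y - y₀‖ ^ 2)) =ᶠ[𝓝 x]
      fun y => (2 * g' (‖y - y₀‖ ^ 2)) • innerSL ℝ (y - y₀) :=
    ((by fun_prop : Continuous fun y : E => ‖y - y₀‖ ^ 2).tendsto x |>.eventually hg).mono
      fun y hy => hy.hasFDerivAt_comp_norm_sub_sq.fderiv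
  have hsecond : HasFDerivAt (fun y => (2 * g' (‖y - y₀‖ ^ 2)) • innerSL ℝ (y - y₀)) _ x :=
    (hg'.hasFDerivAt_comp_norm_sub_sq.const_mul 2).smul
      ((innerSL ℝ).hasFDerivAt.comp x ((hasFDerivAt_id x).sub_const y₀))
  rw [iteratedFDeriv_two_apply, hfderiv.fderiv_eq, hsecond.fderiv]
  simp only [Matrix.cons_val_zero, Matrix.cons_val_one, add_apply, smul_apply,
    ContinuousLinearMap.smulRight_apply, ContinuousLinearMap.comp_apply,
    ContinuousLinearMap.id_apply, innerSL_apply_apply, smul_eq_mul]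
  rw [innerSL_apply_apply]
  ring

end Radial

namespace Matrix

theorem det_smul_one_add_vecMulVec {m K : Type*} [Fintype m] [DecidableEq m] [Nonempty m]
    [Field K] {c : K} (hc : c ≠ 0) (u v : m → K) :
    (c • (1 : Matrix m m K) + vecMulVec u v).det = c ^ (Fintype.card m - 1) * (c + v ⬝ᵥ u) := by
  have hfactor : c • (1 : Matrix m m K) + vecMulVec u v =
      c • (1 + replicateCol Unit (c⁻¹ • u) * replicateRow Unit v) := by
    rw [← vecMulVec_eq, smul_add, smul_one_eq_diagonal]
    ext i j
    simp [vecMulVec_apply, hc]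
  obtain ⟨k, hk⟩ := Nat.exists_eq_succ_of_ne_zero (Fintype.card_ne_zero (α := m))
  rw [hfactor, det_smul, det_one_add_replicateCol_mul_replicateRow, dotProduct_smul, hk,
    Nat.succ_sub_one, pow_succ, smul_eq_mul]
  field_simp

end Matrix

theorem hessianDet_comp_norm_sub_sq {n : ℕ} (hn : 0 < n) {g g' : ℝ → ℝ} {g'' : ℝ}
    {y₀ x : EuclideanSpace ℝ (Fin n)}
    (hg : ∀ᶠ t in 𝓝 (‖x - y₀‖ ^ 2), HasDerivAt g (g' t) t)
    (hg' : HasDerivAt g' g'' (‖x - y₀‖ ^ 2)) (hg'0 : g' (‖x - y₀‖ ^ 2) ≠ 0) :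
    hessianDet (fun y => g (‖y - y₀‖ ^ 2)) x =
      (2 * g' (‖x - y₀‖ ^ 2)) ^ (n - 1) * (2 * g' (‖x - y₀‖ ^ 2) + 4 * g'' * ‖x - y₀‖ ^ 2) := by
  have : Nonempty (Fin n) := Fin.pos_iff_nonempty.mp hn
  have hmatrix : Matrix.of (fun i j : Fin n => iteratedFDeriv ℝ 2 (fun y => g (‖y - y₀‖ ^ 2)) x
      ![EuclideanSpace.single i 1, EuclideanSpace.single j 1]) =
      (2 * g' (‖x - y₀‖ ^ 2)) • 1 + Matrix.vecMulVec ((4 * g'') • ⇑(x - y₀)) ⇑(x - y₀) := by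
    ext i j
    rw [Matrix.of_apply, iteratedFDeriv_two_comp_norm_sub_sq_apply hg hg',
      EuclideanSpace.inner_single_left, EuclideanSpace.inner_single_right,
      EuclideanSpace.inner_single_right, PiLp.single_apply]
    simp only [Real.ringHom_apply, mul_ite, mul_one, mul_zero, one_mul, WithLp.ofLp_sub,
      Matrix.smul_vecMulVec, Matrix.add_apply, Matrix.smul_apply, Matrix.one_apply, smul_eq_mul,
      Matrix.vecMulVec_apply, Pi.sub_apply]
    ring
  rw [hessianDet, hmatrix, Matrix.det_smul_one_add_vecMulVec (by simpa using hg'0),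
    Fintype.card_fin, dotProduct_smul, ← real_inner_self_eq_norm_sq,
    EuclideanSpace.inner_eq_star_dotProduct]
  simp [smul_eq_mul]

theorem hasDerivAt_mul_sub_rpow (K c b : ℝ) {t : ℝ} (ht : t < c) :
    HasDerivAt (fun t => K * (c - t) ^ b) (-(K * b) * (c - t) ^ (b - 1)) t := by
  refine (((hasDerivAt_id t).const_sub c).rpow_const (Or.inl (sub_pos.2 ht).ne')).const_mul K
    |>.congr_deriv ?_
  simp only [id]
  ring

section Barrier

variable {n : ℕ} {M R b : ℝ} {y₀ x : EuclideanSpace ℝ (Fin n)}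

theorem hessianDet_barrier (hn : 0 < n) (hM : M ≠ 0) (hb : b ≠ 0) (hx : x ∈ Metric.ball y₀ R) :
    hessianDet (fun y => -M * (R ^ 2 - ‖y - y₀‖ ^ 2) ^ b) x =
      (2 * M * b * (R ^ 2 - ‖x - y₀‖ ^ 2) ^ (b - 1)) ^ (n - 1) *
        (2 * M * b * (R ^ 2 - ‖x - y₀‖ ^ 2) ^ (b - 1) +
          4 * M * b * (1 - b) * (R ^ 2 - ‖x - y₀‖ ^ 2) ^ (b - 2) * ‖x - y₀‖ ^ 2) := by
  have hs : ‖x - y₀‖ ^ 2 < R ^ 2 :=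
    pow_lt_pow_left₀ (mem_ball_iff_norm.1 hx) (norm_nonneg _) two_ne_zero
  have hg : ∀ᶠ t in 𝓝 (‖x - y₀‖ ^ 2),
      HasDerivAt (fun t => -M * (R ^ 2 - t) ^ b) (M * b * (R ^ 2 - t) ^ (b - 1)) t :=
    (eventually_lt_nhds hs).mono fun t ht =>
      (hasDerivAt_mul_sub_rpow _ _ _ ht).congr_deriv (by ring)
  have hg' : HasDerivAt (fun t => M * b * (R ^ 2 - t) ^ (b - 1))
      (M * b * (1 - b) * (R ^ 2 - ‖x - y₀‖ ^ 2) ^ (b - 2)) (‖x - y₀‖ ^ 2) :=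
    (hasDerivAt_mul_sub_rpow _ _ _ hs).congr_deriv (by rw [sub_sub]; norm_num; ring)
  have hg'0 : M * b * (R ^ 2 - ‖x - y₀‖ ^ 2) ^ (b - 1) ≠ 0 :=
    mul_ne_zero (mul_ne_zero hM hb) (Real.rpow_pos_of_pos (sub_pos.2 hs) _).ne'
  rw [hessianDet_comp_norm_sub_sq hn hg hg' hg'0]
  ring

theorem hessianDet_barrier_le (hn : 0 < n) (hM : 0 < M) (hb : 0 < b)
    (hx : x ∈ Metric.ball y₀ R) :
    hessianDet (fun y => -M * (R ^ 2 - ‖y - y₀‖ ^ 2) ^ b) x ≤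
      (2 * M * b) ^ n * (2 * R ^ 2) * (R ^ 2 - ‖x - y₀‖ ^ 2) ^ ((n : ℝ) * b - n - 1) := by
  have hs : ‖x - y₀‖ ^ 2 < R ^ 2 :=
    pow_lt_pow_left₀ (mem_ball_iff_norm.1 hx) (norm_nonneg _) two_ne_zero
  rw [hessianDet_barrier hn hM.ne' hb.ne' hx]
  obtain ⟨k, rfl⟩ : ∃ k, n = k + 1 := ⟨n - 1, by omega⟩
  set r := ‖x - y₀‖
  set ρ := R ^ 2 - r ^ 2
  have hρ : 0 < ρ := sub_pos.2 hs
  have hρ₁ : ρ ^ (b - 1) = ρ ^ (b - 2) * ρ := by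
    rw [← Real.rpow_add_one hρ.ne']
    ring_nf
  have hρ₂ : ρ ^ (((k + 1) : ℝ) * b - (k + 1) - 1) = (ρ ^ (b - 2)) ^ (k + 1) * ρ ^ k := by
    rw [← Real.rpow_mul_natCast hρ.le, ← Real.rpow_natCast ρ k, ← Real.rpow_add hρ]
    push_cast
    ring_nf
  have hsum : ρ + 2 * (1 - b) * r ^ 2 ≤ 2 * R ^ 2 := by nlinarith
  clear_value ρ
  calc (2 * M * b * ρ ^ (b - 1)) ^ ((k + 1) - 1) *
        (2 * M * b * ρ ^ (b - 1) + 4 * M * b * (1 - b) * ρ ^ (b - 2) * r ^ 2)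
      = (2 * M * b) ^ (k + 1) * ρ ^ (((k + 1) : ℝ) * b - (k + 1) - 1) *
          (ρ + 2 * (1 - b) * r ^ 2) := by
        rw [hρ₂, hρ₁, Nat.add_sub_cancel]
        ring
    _ ≤ (2 * M * b) ^ (k + 1) * ρ ^ (((k + 1) : ℝ) * b - (k + 1) - 1) * (2 * R ^ 2) := by
        gcongr
    _ = (2 * M * b) ^ (k + 1) * (2 * R ^ 2) * ρ ^ (((k + 1 : ℕ) : ℝ) * b - (k + 1 : ℕ) - 1) := by
        push_cast
        ring

end Barrier

theorem hessian_bound_le_supersolution_rhs {n : ℕ} {α β b M r R : ℝ} (hM : 0 < M) (hb : 0 ≤ b)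
    (hr : 0 ≤ r) (hrR : r < R) (hβ : (n : ℝ) + 1 ≤ β) (hbβ : b * (n + α) = β) :
    (2 * M * b) ^ n * (2 * R ^ 2) * (R ^ 2 - r ^ 2) ^ ((n : ℝ) * b - n - 1) ≤
      M ^ ((n : ℝ) + α) * ((2 * b) ^ n * (2 * R ^ 2) * (2 * R) ^ (β - n - 1)) *
        (R - r) ^ (β - n - 1) * (M * (R ^ 2 - r ^ 2) ^ b) ^ (-α) := by
  set ρ := R ^ 2 - r ^ 2
  set e := β - n - 1
  have hρ : 0 < ρ := by nlinarith
  have hsplit : ρ ^ ((n : ℝ) * b - n - 1) = ρ ^ e * ρ ^ (-(b * α)) := by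
    rw [← Real.rpow_add hρ]
    congr 1
    linear_combination hbβ
  have hρe : ρ ^ e ≤ (2 * R) ^ e * (R - r) ^ e := by
    rw [← Real.mul_rpow (by linarith) (by linarith)]
    exact Real.rpow_le_rpow hρ.le (by nlinarith) (by linarith)
  have hM : M ^ ((n : ℝ) + α) * (M * ρ ^ b) ^ (-α) = M ^ n * ρ ^ (-(b * α)) := by
    rw [Real.mul_rpow hM.le (Real.rpow_nonneg hρ.le b), ← Real.rpow_mul hρ.le,
      Real.rpow_add hM, Real.rpow_natCast, Real.rpow_neg hM.le]
    field_simp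
  calc (2 * M * b) ^ n * (2 * R ^ 2) * ρ ^ ((n : ℝ) * b - n - 1)
      = (2 * b) ^ n * (2 * R ^ 2) * (M ^ n * ρ ^ (-(b * α))) * ρ ^ e := by
        rw [hsplit, mul_pow, mul_pow, mul_pow]
        ring
    _ ≤ (2 * b) ^ n * (2 * R ^ 2) * (M ^ n * ρ ^ (-(b * α))) * ((2 * R) ^ e * (R - r) ^ e) := by
        gcongr
    _ = _ := by
        rw [← hM]
        ring

theorem exists_supersolution_ball_general
    (n : ℕ) (hn : 2 ≤ n) (A α R β b : ℝ) (hA : 0 < A) (hα : 0 ≤ α) (hR : 0 < R)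
    (y₀ : EuclideanSpace ℝ (Fin n))
    (hβ : (n : ℝ) + 1 ≤ β) (hb : b = β / ((n : ℝ) + α)) :
    ∃ M : ℝ, 0 < M ∧
      ∀ x ∈ Metric.ball y₀ R,
        hessianDet (fun y : EuclideanSpace ℝ (Fin n) =>
            -M * (R ^ 2 - ‖y - y₀‖ ^ 2) ^ b) x
          ≤ A * (R - ‖x - y₀‖) ^ (β - n - 1) * |-M * (R ^ 2 - ‖x - y₀‖ ^ 2) ^ b| ^ (-α) := by
  have hnα : 0 < (n : ℝ) + α := by
    have : (2 : ℝ) ≤ n := by exact_mod_cast hn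
    linarith
  have hb₀ : 0 < b := hb ▸ div_pos (by linarith [n.cast_nonneg (α := ℝ)]) hnα
  have hbβ : b * (n + α) = β := by rw [hb, div_mul_cancel₀ _ hnα.ne']
  set C := (2 * b) ^ n * (2 * R ^ 2) * (2 * R) ^ (β - n - 1)
  have hC : 0 < C := by positivity
  obtain ⟨M, hM, hMC⟩ : ∃ M : ℝ, 0 < M ∧ M ^ ((n : ℝ) + α) * C = A :=
    ⟨(A / C) ^ ((n : ℝ) + α)⁻¹, by positivity, by
      rw [Real.rpow_inv_rpow (by positivity) hnα.ne', div_mul_cancel₀ _ hC.ne']⟩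
  refine ⟨M, hM, fun x hx => ?_⟩
  have hr : ‖x - y₀‖ < R := mem_ball_iff_norm.1 hx
  have hρ : 0 < (R ^ 2 - ‖x - y₀‖ ^ 2) ^ b :=
    Real.rpow_pos_of_pos (by nlinarith [norm_nonneg (x - y₀)]) b
  rw [neg_mul, abs_neg, abs_of_pos (mul_pos hM hρ), ← hMC]
  exact (hessianDet_barrier_le (by omega) hM hb₀ hx).trans
    (hessian_bound_le_supersolution_rhs hM hb₀.le (norm_nonneg _) hr hβ hbβ)

/-- For `n+1 ≤ β < n+α` and `b = β/(n+α)`, there is `M > 0` such that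
`W(x) = -M (R² - |x-y₀|²)^b` satisfies
`det D²W ≤ A (R - |x-y₀|)^{β-n-1} |W|^{-α}` on `B_R(y₀)` (a supersolution). -/
theorem exists_supersolution_ball
    (n : ℕ) (hn : 2 ≤ n) (A α R β b : ℝ) (hA : 0 < A) (hα : 0 ≤ α) (hR : 0 < R)
    (y₀ : EuclideanSpace ℝ (Fin n))
    (hβ : (n : ℝ) + 1 ≤ β) (hβ' : β < n + α) (hb : b = β / ((n : ℝ) + α)) :
    ∃ M : ℝ, 0 < M ∧
      ∀ x ∈ Metric.ball y₀ R,
        hessianDet (fun y : EuclideanSpace ℝ (Fin n) =>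
            -M * (R ^ 2 - ‖y - y₀‖ ^ 2) ^ b) x
          ≤ A * (R - ‖x - y₀‖) ^ (β - n - 1) * |-M * (R ^ 2 - ‖x - y₀‖ ^ 2) ^ b| ^ (-α) :=
  exists_supersolution_ball_general n hn A α R β b hA hα hR y₀ hβ hb
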